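/- arXiv:1701.04439 — 5 statements merged into one kernel-verified Lean document; each statement's English description precedes it below -/
import Mathlib

section
/- For any assignment M of n messages to n servers, the macro-averaged recall R_M satisfies R_M ≤ sqrt(D_M), where D_M is the macro-averaged precision. Equivalently, R_M^2 ≤ D_M. -/
/-!
Only fixed points `v` of `M` contribute to either average, and such a `v` lies in its own fibre
`M⁻¹(v)`, so these fibres are nonempty, pairwise disjoint, and their sizes sum to at most `n`.
If `F` is the set of fixed points, the precision sum is `∑_{v ∈ F} 1 / |M⁻¹(v)|`, and by AM-HM
`|F|² ≤ (∑_{v ∈ F} |M⁻¹(v)|) · ∑_{v ∈ F} 1 / |M⁻¹(v)| ≤ n · ∑_{v ∈ F} 1 / |M⁻¹(v)|`,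
which is `R_M² ≤ D_M` after dividing by `n²`.
-/

open Finset

lemma sq_card_le_sum_mul_sum_inv {ι R : Type*} [Field R] [LinearOrder R] [IsStrictOrderedRing R]
    (s : Finset ι) {a : ι → R} (ha : ∀ i ∈ s, 0 < a i) :
    (#s : R) ^ 2 ≤ (∑ i ∈ s, a i) * ∑ i ∈ s, (a i)⁻¹ := by
  rcases s.eq_empty_or_nonempty with rfl | hs
  · simp
  have titu := sq_sum_div_le_sum_sq_div s 1 ha
  simp only [Pi.one_apply, sum_const, nsmul_eq_mul, mul_one, one_pow, one_div] at titu
  rwa [div_le_iff₀ (sum_pos ha hs), mul_comm] at titu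

lemma sum_card_fiber_le_card {α β : Type*} [Fintype α] [DecidableEq β] (M : α → β)
    (s : Finset β) : ∑ v ∈ s, #{w | M w = v} ≤ Fintype.card α := by
  rw [sum_card_fiberwise_eq_card_filter]
  exact card_le_univ _

lemma card_fiber_pos_of_isFixedPt {V : Type*} [Fintype V] [DecidableEq V] {M : V → V} {v : V}
    (hv : Function.IsFixedPt M v) : 0 < #{w | M w = v} :=
  card_pos.mpr ⟨v, mem_filter.mpr ⟨mem_univ v, hv⟩⟩

theorem sq_card_fixedPoints_le_card_mul_sum_inv_card_fiber {V : Type*} [Fintype V]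
    [DecidableEq V] (M : V → V) :
    (#{v | M v = v} : ℝ) ^ 2 ≤
      Fintype.card V * ∑ v ∈ {v | M v = v}, (#{w | M w = v} : ℝ)⁻¹ := by
  have hpos : ∀ v ∈ ({v | M v = v} : Finset V), (0 : ℝ) < #{w | M w = v} := fun v hv ↦
    Nat.cast_pos.mpr (card_fiber_pos_of_isFixedPt (mem_filter.mp hv).2)
  calc (#{v | M v = v} : ℝ) ^ 2
      ≤ (∑ v ∈ {v | M v = v}, (#{w | M w = v} : ℝ)) *
          ∑ v ∈ {v | M v = v}, (#{w | M w = v} : ℝ)⁻¹ :=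
        sq_card_le_sum_mul_sum_inv _ hpos
    _ ≤ Fintype.card V * ∑ v ∈ {v | M v = v}, (#{w | M w = v} : ℝ)⁻¹ := by
        gcongr
        exact_mod_cast sum_card_fiber_le_card M _

lemma div_sq_le_div_of_sq_le_mul {R : Type*} [Field R] [LinearOrder R] [IsStrictOrderedRing R]
    {x y n : R} (hn : 0 ≤ n) (h : x ^ 2 ≤ n * y) : (x / n) ^ 2 ≤ y / n := by
  rcases hn.eq_or_lt with rfl | hn
  · simp
  calc (x / n) ^ 2 = x ^ 2 / n ^ 2 := div_pow x n 2
    _ ≤ n * y / n ^ 2 := by gcongr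
    _ = y / n := by field_simp

/-- Macro-averaged recall squared is at most macro-averaged precision: `R_M² ≤ D_M`. -/
theorem stmt_1 {V : Type*} [Fintype V] [DecidableEq V] (M : V → V) :
    ((∑ v : V, (if M v = v then (1 : ℝ) else 0)) / (Fintype.card V : ℝ)) ^ 2 ≤
    (∑ v : V, (if M v = v then (1 : ℝ) else 0) /
        ((Finset.univ.filter (fun w => M w = v)).card : ℝ)) / (Fintype.card V : ℝ) := by
  have recall_sum : ∑ v : V, (if M v = v then (1 : ℝ) else 0) = #{v | M v = v} := by
    rw [sum_boole]
  have precision_sum : ∑ v : V, (if M v = v then (1 : ℝ) else 0) / #{w | M w = v} =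
      ∑ v ∈ {v | M v = v}, (#{w | M w = v} : ℝ)⁻¹ := by
    simp only [ite_div, one_div, zero_div, sum_filter]
  rw [recall_sum, precision_sum]
  exact div_sq_le_div_of_sq_le_mul (Nat.cast_nonneg _)
    (sq_card_fixedPoints_le_card_mul_sum_inv_card_fiber M)
end

section
/- The precision-maximizing mapping of messages to servers, given the adversary's observations O, is a matching on the bipartite graph (V_H, X) that maximizes the total weight Σ_{(v,x)∈M} P(X_v = x | O); i.e., for any mapping M there exists a matching M' with E[D_{M'} | O] ≥ E[D_M | O], and among matchings the expected precision equals the matching weight, so the optimum is a maximum-weight bipartite matching. -/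
open Finset

/-- Expected macro-averaged precision of a mapping `M : X → V_H`, given posteriors
`w v x = P(X_v = x | O)`; a server mapped `k` messages contributes the average of
their posteriors (0/0 = 0 convention is Lean's division by zero). -/
noncomputable def precOf {V X : Type*} [Fintype V] [Fintype X] [DecidableEq V]
    (w : V → X → ℝ) (M : X → V) : ℝ :=
  (∑ v : V, (∑ x ∈ Finset.univ.filter (fun x => M x = v), w v x) /
      ((Finset.univ.filter (fun x => M x = v)).card : ℝ)) / (Fintype.card V : ℝ)

/-!
Some message in each nonempty fiber of `M` has posterior at least the fiber average, so keeping
one such message per fiber loses no precision. `M` is injective on the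
kept messages; as `|X| = |V|` it extends to a bijection, and the added pairs have nonnegative
weight. For an injective mapping every fiber has at most one element, so its precision is the
matching weight divided by `|V|`.
-/

theorem Finset.exists_sum_div_card_le {ι K : Type*} [Field K] [LinearOrder K] [IsStrictOrderedRing K]
    {s : Finset ι} (hs : s.Nonempty) (f : ι → K) : ∃ i ∈ s, (∑ j ∈ s, f j) / #s ≤ f i := by
  refine exists_le_of_sum_le hs (le_of_eq ?_)
  rw [sum_const, nsmul_eq_mul, mul_div_cancel₀ _ (by exact_mod_cast hs.card_pos.ne')]

section Precision

variable {V X : Type*} [Fintype X] [DecidableEq V] (w : V → X → ℝ) {M : X → V}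

noncomputable def fiberAvg (w : V → X → ℝ) (M : X → V) (v : V) : ℝ :=
  (∑ x ∈ univ.filter (fun x => M x = v), w v x) / #(univ.filter fun x => M x = v)

theorem precOf_eq_sum_fiberAvg [Fintype V] (M : X → V) :
    precOf w M = (∑ v, fiberAvg w M v) / Fintype.card V := rfl

theorem fiberAvg_eq_zero_of_notMem_image {v : V} (hv : v ∉ univ.image M) :
    fiberAvg w M v = 0 := by
  have : univ.filter (fun x => M x = v) = ∅ := by
    simpa [filter_eq_empty_iff] using hv
  simp [fiberAvg, this]

theorem exists_le_fiberAvg {v : V} (hv : v ∈ univ.image M) :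
    ∃ x, M x = v ∧ fiberAvg w M v ≤ w v x := by
  obtain ⟨x, -, rfl⟩ := mem_image.mp hv
  obtain ⟨y, hy, hle⟩ := exists_sum_div_card_le
    (s := univ.filter fun y => M y = M x) ⟨x, by simp⟩ (w (M x))
  exact ⟨y, (mem_filter.mp hy).2, hle⟩

theorem fiberAvg_of_injective (hM : M.Injective) (v : V) :
    fiberAvg w M v = ∑ x ∈ univ.filter (fun x => M x = v), w v x := by
  have hcard : #(univ.filter fun x => M x = v) ≤ 1 :=
    card_le_one.mpr fun a ha b hb => hM ((mem_filter.mp ha).2.trans (mem_filter.mp hb).2.symm)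
  rcases Nat.le_one_iff_eq_zero_or_eq_one.mp hcard with h | h
  · simp [fiberAvg, card_eq_zero.mp h]
  · simp [fiberAvg, h]

theorem precOf_of_injective [Fintype V] (hM : M.Injective) :
    precOf w M = (∑ x, w (M x) x) / Fintype.card V := by
  rw [precOf_eq_sum_fiberAvg, ← sum_fiberwise univ M (fun x => w (M x) x)]
  congr 1
  refine sum_congr rfl fun v _ => ?_
  rw [fiberAvg_of_injective w hM]
  exact sum_congr rfl fun x hx => by rw [(mem_filter.mp hx).2]

theorem exists_injOn_sum_fiberAvg_le [Fintype V] (M : X → V) :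
    ∃ s : Finset X, Set.InjOn M s ∧ ∑ v, fiberAvg w M v ≤ ∑ x ∈ s, w (M x) x := by
  classical
  choose r hrM hr using fun v (hv : v ∈ univ.image M) => exists_le_fiberAvg w hv
  set rep : univ.image M → X := fun v => r v.1 v.2
  have hrep : ∀ v, M (rep v) = v := fun v => hrM v.1 v.2
  have hinj : Set.InjOn rep (univ.image M).attach := fun a _ b _ hab =>
    Subtype.ext ((hrep a).symm.trans ((congrArg M hab).trans (hrep b)))
  refine ⟨(univ.image M).attach.image rep, ?_, ?_⟩
  · intro x hx y hy hxy
    obtain ⟨a, -, rfl⟩ := mem_image.mp hx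
    obtain ⟨b, -, rfl⟩ := mem_image.mp hy
    exact congrArg rep (Subtype.ext ((hrep a).symm.trans (hxy.trans (hrep b))))
  · calc ∑ v, fiberAvg w M v = ∑ v ∈ univ.image M, fiberAvg w M v :=
          (sum_subset (subset_univ _) fun v _ hv => fiberAvg_eq_zero_of_notMem_image w hv).symm
      _ = ∑ v ∈ (univ.image M).attach, fiberAvg w M v := (sum_attach _ _).symm
      _ ≤ ∑ v ∈ (univ.image M).attach, w v (rep v) := sum_le_sum fun v _ => hr v.1 v.2
      _ = ∑ x ∈ (univ.image M).attach.image rep, w (M x) x := by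
          rw [sum_image hinj]
          exact sum_congr rfl fun v _ => by rw [hrep v]

end Precision

theorem stmt_4_general {V X : Type*} [Fintype V] [Fintype X] [DecidableEq V]
    (w : V → X → ℝ) (hw : ∀ v x, 0 ≤ w v x)
    (hcard : Fintype.card X = Fintype.card V) :
    (∀ M : X → V, ∃ M' : X → V, Function.Injective M' ∧ precOf w M ≤ precOf w M') ∧
    (∀ M' : X → V, Function.Injective M' →
      precOf w M' = (∑ x : X, w (M' x) x) / (Fintype.card V : ℝ)) := by
  refine ⟨fun M => ?_, fun M' hM' => precOf_of_injective w hM'⟩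
  obtain ⟨s, hs, hle⟩ := exists_injOn_sum_fiberAvg_le w M
  obtain ⟨g, hg⟩ := exists_equiv_extend_of_card_eq (t := univ) (by simp [hcard]) (subset_univ _) hs
  have hinj : Function.Injective fun x => (g x : V) := Subtype.val_injective.comp g.injective
  refine ⟨_, hinj, ?_⟩
  rw [precOf_of_injective w hinj, precOf_eq_sum_fiberAvg]
  gcongr
  calc ∑ v, fiberAvg w M v ≤ ∑ x ∈ s, w (M x) x := hle
    _ = ∑ x ∈ s, w (g x) x := sum_congr rfl fun x hx => by rw [hg x hx]
    _ ≤ ∑ x, w (g x) x := sum_le_sum_of_subset_of_nonneg (subset_univ _) fun x _ _ => hw _ _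

/-- The precision-maximizing estimator is a maximum-weight bipartite matching:
any mapping is dominated by a matching (an injective mapping), and for a matching
the expected precision equals its total matching weight. -/
theorem stmt_4 {V X : Type*} [Fintype V] [Fintype X] [DecidableEq V] [DecidableEq X]
    (w : V → X → ℝ) (hw : ∀ v x, 0 ≤ w v x)
    (hcard : Fintype.card X = Fintype.card V) :
    (∀ M : X → V, ∃ M' : X → V, Function.Injective M' ∧ precOf w M ≤ precOf w M') ∧
    (∀ M' : X → V, Function.Injective M' →
      precOf w M' = (∑ x : X, w (M' x) x) / (Fintype.card V : ℝ)) :=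
  stmt_4_general w hw hcard
end

section
/- The expected first-spy precision of diffusion-by-proxy at any honest node v satisfies D_FS(v) = (p + 1/n) · E[1/(1+Z_v)] ≥ (p/(1−p))(1 − e^{p−1}), where Z_v ~ Binomial(ñ−1, 1/n) and ñ = (1−p)n. -/
open Finset

/-- `(m + 1) * C(m, k) / (k + 1) = C(m + 1, k + 1)` turns the sum into the binomial expansion of
`(x + y) ^ (m + 1)` without its `k = 0` term. -/
theorem mul_sum_choose_mul_pow_mul_inv_succ {K : Type*} [Field K] [CharZero K] (m : ℕ) (x y : K) :
    ((m : K) + 1) * x * ∑ k ∈ range (m + 1),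
        (m.choose k : K) * x ^ k * y ^ (m - k) * (1 / (1 + (k : K)))
      = (x + y) ^ (m + 1) - y ^ (m + 1) := by
  have hterm : ∀ k ∈ range (m + 1), ((m : K) + 1) * x *
      ((m.choose k : K) * x ^ k * y ^ (m - k) * (1 / (1 + (k : K))))
        = x ^ (k + 1) * y ^ (m + 1 - (k + 1)) * ((m + 1).choose (k + 1) : K) := by
    intro k _
    have hchoose : ((m : K) + 1) * m.choose k = (m + 1).choose (k + 1) * ((k : K) + 1) := by
      exact_mod_cast Nat.add_one_mul_choose_eq m k
    have hk : (1 : K) + k ≠ 0 := by rw [add_comm]; exact Nat.cast_add_one_ne_zero k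
    rw [Nat.add_sub_add_right]
    field_simp
    linear_combination x * x ^ k * y ^ (m - k) * hchoose
  rw [mul_sum, sum_congr rfl hterm, add_pow, sum_range_succ' _ (m + 1)]
  simp

theorem sum_choose_mul_pow_mul_inv_succ {x : ℝ} (hx : x ≠ 0) (m : ℕ) :
    ∑ k ∈ range (m + 1), (m.choose k : ℝ) * x ^ k * (1 - x) ^ (m - k) * (1 / (1 + (k : ℝ)))
      = (1 - (1 - x) ^ (m + 1)) / (((m : ℝ) + 1) * x) := by
  rw [eq_div_iff (by positivity), mul_comm, mul_sum_choose_mul_pow_mul_inv_succ, add_sub_cancel,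
    one_pow]

/-- Diffusion-by-proxy first-spy precision at an honest node: with
`Z_v ~ Binomial(ñ−1, 1/n)`, `ñ = (1−p)n`, the precision
`(p + 1/n)·E[1/(1+Z_v)]` is at least `(p/(1−p))(1 − e^{p−1})`. -/
theorem stmt_11 (n ntil : ℕ) (p : ℝ) (hn : 1 ≤ n) (hp0 : 0 < p) (hp1 : p < 1)
    (hnt : (ntil : ℝ) = (1 - p) * (n : ℝ)) (hnt1 : 1 ≤ ntil) :
    (p / (1 - p)) * (1 - Real.exp (p - 1)) ≤
      (p + 1 / (n : ℝ)) *
        ∑ k ∈ Finset.range ntil,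
          ((ntil - 1).choose k : ℝ) * (1 / (n : ℝ)) ^ k *
            (1 - 1 / (n : ℝ)) ^ (ntil - 1 - k) * (1 / ((1 : ℝ) + (k : ℝ))) := by
  have hn0 : (0 : ℝ) < n := by exact_mod_cast hn
  have hq : (0 : ℝ) < 1 - p := by linarith
  have hmean : (ntil : ℝ) * (1 / n) = 1 - p := by rw [hnt]; field_simp
  obtain ⟨m, rfl⟩ : ∃ m, ntil = m + 1 := ⟨ntil - 1, by omega⟩
  have hpow : (1 - 1 / (n : ℝ)) ^ (m + 1) ≤ Real.exp (p - 1) := by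
    have h := Real.one_sub_div_pow_le_exp_neg (n := m + 1) (t := 1 - p)
      (by rw [hnt]; exact le_mul_of_one_le_right hq.le (by exact_mod_cast hn))
    rwa [neg_sub, ← hmean, mul_div_cancel_left₀ _ (by positivity)] at h
  rw [Nat.add_sub_cancel, sum_choose_mul_pow_mul_inv_succ (by positivity), ← Nat.cast_add_one,
    hmean, div_mul_eq_mul_div, mul_div_assoc']
  gcongr
  · linarith [Real.exp_lt_one_iff.mpr (by linarith : p - 1 < 0)]
  · linarith [show 0 < 1 / (n : ℝ) by positivity]
end

section
/- On a dynamic line graph (dandelion), for an honest node v, the probability of the event E_v(i,0) that v's successor is adversarial, the i nodes preceding v are honest, and the (i+1)-th predecessor is adversarial (i > 0) satisfies P(E_v(i,0)) ≤ (p + 1/n)² (1 − p + 2/n)^i, where the probability conditional on v's position is the product (np/(n−1))((np−1)/(n−2))·∏_{j=1}^{i}((ñ−j)/(n−2−j)) with ñ = (1−p)n honest of n total nodes. -/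
/-! Each factor of the hypergeometric product has the shape `(x - c) / (y - c)` with `0 ≤ c`
and `x ≤ y`, and removing the same amount from numerator and denominator can only shrink a
fraction at most `1`. The two adversarial factors are `(a + 1 - c) / (n - c)` for `c = 1, 2`
and the honest ones are `(n - a + 2 - c) / (n - c)` for `c = j + 2`; the latter needs `a ≥ 2`,
and for `a < 2` one of the adversarial factors vanishes. -/

theorem sub_div_sub_le_div {α : Type*} [Field α] [LinearOrder α] [IsStrictOrderedRing α]
    {x y c : α} (hc : 0 ≤ c) (hcy : c ≤ y) (hx : 0 ≤ x) (hxy : x ≤ y) :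
    (x - c) / (y - c) ≤ x / y := by
  obtain hcy | rfl := hcy.lt_or_eq
  · have hy : 0 < y := hc.trans_lt hcy
    rw [div_le_div_iff₀ (sub_pos.2 hcy) hy]
    nlinarith
  · -- `x / 0 = 0`
    simpa using div_nonneg hx hc

section HonestFactors

variable {n a i j : ℕ}

theorem honest_factor_nonneg (ha : 2 ≤ a) (hja : j + a ≤ n) :
    0 ≤ ((n : ℝ) - a - j) / ((n : ℝ) - 2 - j) := by
  have : (j : ℝ) + a ≤ n := by exact_mod_cast hja
  have : (2 : ℝ) ≤ a := by exact_mod_cast ha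
  exact div_nonneg (by linarith) (by linarith)

theorem honest_factor_le (ha : 2 ≤ a) (hja : j + a ≤ n) :
    ((n : ℝ) - a - j) / ((n : ℝ) - 2 - j) ≤ ((n : ℝ) - a + 2) / n := by
  have : (j : ℝ) + a ≤ n := by exact_mod_cast hja
  have : (2 : ℝ) ≤ a := by exact_mod_cast ha
  have key := sub_div_sub_le_div (x := (n : ℝ) - a + 2) (y := n) (c := j + 2)
    (by positivity) (by linarith) (by linarith) (by linarith)
  rwa [show (n : ℝ) - a + 2 - (j + 2) = n - a - j by ring,
    show (n : ℝ) - (j + 2) = n - 2 - j by ring] at key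

theorem prod_honest_factors_nonneg (ha : 2 ≤ a) (hia : i + a ≤ n) :
    0 ≤ ∏ j ∈ Finset.Icc 1 i, (((n : ℝ) - a - j) / ((n : ℝ) - 2 - j)) :=
  Finset.prod_nonneg fun j hj ↦
    honest_factor_nonneg ha (by have := (Finset.mem_Icc.1 hj).2; omega)

theorem prod_honest_factors_le (ha : 2 ≤ a) (hia : i + a ≤ n) :
    ∏ j ∈ Finset.Icc 1 i, (((n : ℝ) - a - j) / ((n : ℝ) - 2 - j))
      ≤ (((n : ℝ) - a + 2) / n) ^ i := by
  have hja : ∀ j ∈ Finset.Icc 1 i, j + a ≤ n := fun j hj ↦ by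
    have := (Finset.mem_Icc.1 hj).2
    omega
  calc ∏ j ∈ Finset.Icc 1 i, (((n : ℝ) - a - j) / ((n : ℝ) - 2 - j))
      ≤ ∏ _j ∈ Finset.Icc 1 i, (((n : ℝ) - a + 2) / n) :=
        Finset.prod_le_prod (fun j hj ↦ honest_factor_nonneg ha (hja j hj))
          (fun j hj ↦ honest_factor_le ha (hja j hj))
    _ = (((n : ℝ) - a + 2) / n) ^ i := by
        rw [Finset.prod_const, Nat.card_Icc, add_tsub_cancel_right]

end HonestFactors

section AdversarialFactors

variable {n a : ℕ}

theorem adversarial_factors_eq_zero (ha : a < 2) :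
    ((a : ℝ) / (n - 1)) * ((a - 1) / (n - 2)) = 0 := by
  interval_cases a <;> norm_num

theorem adversarial_factors_le (ha2 : 2 ≤ a) (ha : a + 1 ≤ n) :
    ((a : ℝ) / (n - 1)) * ((a - 1) / (n - 2)) ≤ ((a + 1) / n) * ((a + 1) / n) := by
  have ha' : (a : ℝ) + 1 ≤ n := by exact_mod_cast ha
  have : (2 : ℝ) ≤ a := by exact_mod_cast ha2
  have hfirst := sub_div_sub_le_div (c := (1 : ℝ)) zero_le_one (by linarith) (by positivity) ha'
  have hsecond := sub_div_sub_le_div (c := (2 : ℝ)) zero_le_two (by linarith) (by positivity) ha'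
  rw [add_sub_cancel_right] at hfirst
  rw [show (a : ℝ) + 1 - 2 = a - 1 by ring] at hsecond
  exact mul_le_mul hfirst hsecond (div_nonneg (by linarith) (by linarith)) (by positivity)

end AdversarialFactors

theorem stmt_16_general (n a i : ℕ) (p : ℝ) (hp : p = (a : ℝ) / (n : ℝ))
    (ha : a + 1 ≤ n) (hia : i + a ≤ n) :
    ((a : ℝ) / ((n : ℝ) - 1)) * (((a : ℝ) - 1) / ((n : ℝ) - 2)) *
        ∏ j ∈ Finset.Icc 1 i, (((n : ℝ) - (a : ℝ) - (j : ℝ)) / ((n : ℝ) - 2 - (j : ℝ)))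
      ≤ (p + 1 / (n : ℝ)) ^ 2 * (1 - p + 2 / (n : ℝ)) ^ i := by
  have ha' : (a : ℝ) + 1 ≤ n := by exact_mod_cast ha
  have hn : (0 : ℝ) < n := by linarith [(a.cast_nonneg : (0 : ℝ) ≤ a)]
  have hadv : p + 1 / n = (a + 1) / n := by rw [hp]; field_simp
  have hhon : 1 - p + 2 / n = (n - a + 2) / n := by rw [hp]; field_simp
  rw [hadv, hhon, sq]
  obtain ha2 | ha2 := lt_or_ge a 2
  · rw [adversarial_factors_eq_zero ha2, zero_mul]
    exact mul_nonneg (by positivity) (pow_nonneg (div_nonneg (by linarith) hn.le) i)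
  · exact mul_le_mul (adversarial_factors_le ha2 ha) (prod_honest_factors_le ha2 hia)
      (prod_honest_factors_nonneg ha2 hia) (by positivity)

/-- Dynamic line graph: the hypergeometric product giving the conditional
probability of the event `E_v(i,0)` (adversarial successor, `i` honest
predecessors, adversarial `(i+1)`-th predecessor) is bounded by
`(p + 1/n)²(1 − p + 2/n)^i`, where `a = np` is the number of adversaries. -/
theorem stmt_16 (n a i : ℕ) (p : ℝ) (hp : p = (a : ℝ) / (n : ℝ))
    (ha : a + 1 ≤ n) (hi : 1 ≤ i) (hia : i + a ≤ n) (hin : 2 * (i + 2) ≤ n) :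
    ((a : ℝ) / ((n : ℝ) - 1)) * (((a : ℝ) - 1) / ((n : ℝ) - 2)) *
        ∏ j ∈ Finset.Icc 1 i, (((n : ℝ) - (a : ℝ) - (j : ℝ)) / ((n : ℝ) - 2 - (j : ℝ)))
      ≤ (p + 1 / (n : ℝ)) ^ 2 * (1 - p + 2 / (n : ℝ)) ^ i :=
  stmt_16_general n a i p hp ha hia
end

section
/- For p < 1/3 and using the bounds P(E_v(i,0)), P(E_v(0,j)) ≤ (p+1/n)²(1−p+2/n)^{max(i,j)} with conditional detection probability 1/(i+1) (resp. 1/(j+1)), P(E_v(0,0)) ≤ (p+1/n)² with conditional detection 1, and P(I_v) ≤ (1−p)² with conditional detection ≤ 1/(n(1−3p)), the optimal expected precision at an honest node under dandelion on a dynamic line satisfies D_OPT(v) ≤ (2p²/(1−p))·log(2/p) + O(1/n). -/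
/-!
With `a = p + 1/n` and `q = 1 - p + 2/n`, the Mercator series for `log (1 - q)` sums the
geometric-harmonic series exactly to `a² (-log (1 - q) / q - 1)`. The `-a²` cancels the
`E_v(0,0)` term; then `1 - q = p - 2/n ≥ p/2` gives `-log (1 - q) ≤ log (2/p)`, and
`a²/q ≤ (p² + 3/n)/(1 - p)`, so everything beyond `2p²/(1-p) · log (2/p)` is `O(1/n)`.
-/

open Real

lemma hasSum_pow_succ_div_add_two {q : ℝ} (hq0 : q ≠ 0) (hq : |q| < 1) :
    HasSum (fun i : ℕ => q ^ (i + 1) / ((i : ℝ) + 2)) (-log (1 - q) / q - 1) := by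
  have h := ((hasSum_nat_add_iff' 1).mpr (hasSum_pow_div_log_of_abs_lt_one hq)).div_const q
  have hval : -log (1 - q) / q - 1
      = (-log (1 - q) - ∑ i ∈ Finset.range 1, q ^ (i + 1) / ((i : ℝ) + 1)) / q := by
    simp [sub_div, hq0]
  rw [hval]
  refine h.congr_fun fun i => ?_
  push_cast
  field_simp
  ring

lemma neg_log_le_log_two_div {p x : ℝ} (hp : 0 < p) (hx : p / 2 ≤ x) :
    -log x ≤ log (2 / p) := by
  rw [← log_inv]
  have hx0 : 0 < x := by linarith
  exact log_le_log (inv_pos.mpr hx0) (by rw [← inv_div]; exact inv_anti₀ (by positivity) hx)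

lemma sq_add_le_sq_add_three_mul {p ε : ℝ} (hp1 : p ≤ 1) (hε0 : 0 ≤ ε)
    (hε1 : ε ≤ 1) : (p + ε) ^ 2 ≤ p ^ 2 + 3 * ε := by
  nlinarith

theorem dandelion_precision_bound_le {p x : ℝ} (hp0 : 0 < p) (hp3 : p < 1 / 3)
    (hx : 4 / p ≤ x) :
    2 * (∑' i : ℕ, (p + 1 / x) ^ 2 * (1 - p + 2 / x) ^ (i + 1) / ((i : ℝ) + 2))
        + (p + 1 / x) ^ 2 + (1 - p) ^ 2 / (x * (1 - 3 * p))
      ≤ 2 * p ^ 2 / (1 - p) * log (2 / p)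
        + (6 * log (2 / p) / (1 - p) + (1 - p) ^ 2 / (1 - 3 * p)) / x := by
  have hx0 : 0 < x := (by positivity : (0 : ℝ) < 4 / p).trans_le hx
  have hinv : 1 / x ≤ p / 4 := by
    rw [div_le_iff₀ hp0] at hx
    rw [div_le_div_iff₀ hx0 (by norm_num)]
    linarith
  have hinv0 : 0 < 1 / x := by positivity
  set ε := 1 / x with hε
  have h2 : 2 / x = 2 * ε := by rw [hε]; ring
  rw [h2]
  set a := p + ε
  set q := 1 - p + 2 * ε
  have hq0 : 0 < q := by linarith
  have hq1 : q < 1 := by linarith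
  have hsum : ∑' i : ℕ, a ^ 2 * q ^ (i + 1) / ((i : ℝ) + 2)
      = a ^ 2 * (-log (1 - q) / q - 1) := by
    simp_rw [mul_div_assoc]
    rw [tsum_mul_left,
      (hasSum_pow_succ_div_add_two hq0.ne' (abs_lt.mpr ⟨by linarith, hq1⟩)).tsum_eq]
  have hlog : -log (1 - q) ≤ log (2 / p) := neg_log_le_log_two_div hp0 (by linarith)
  have hlog0 : 0 ≤ -log (1 - q) := neg_nonneg.mpr (log_nonpos (by linarith) (by linarith))
  have ha : a ^ 2 / q ≤ (p ^ 2 + 3 * ε) / (1 - p) :=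
    div_le_div₀ (by positivity) (sq_add_le_sq_add_three_mul (by linarith) hinv0.le (by linarith))
      (by linarith) (by linarith)
  calc 2 * (∑' i : ℕ, a ^ 2 * q ^ (i + 1) / ((i : ℝ) + 2)) + a ^ 2
        + (1 - p) ^ 2 / (x * (1 - 3 * p))
      = 2 * (a ^ 2 / q) * -log (1 - q) - a ^ 2 + (1 - p) ^ 2 / (x * (1 - 3 * p)) := by
        rw [hsum]; field_simp; ring
    _ ≤ 2 * ((p ^ 2 + 3 * ε) / (1 - p)) * log (2 / p) + (1 - p) ^ 2 / (x * (1 - 3 * p)) := by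
        have := mul_le_mul ha hlog hlog0 (div_nonneg (by positivity) (by linarith))
        nlinarith [sq_nonneg a]
    _ = _ := by
        have : 1 - 3 * p ≠ 0 := by linarith
        have : 1 - p ≠ 0 := by linarith
        rw [hε]; field_simp; ring

/-- Dandelion on a dynamic line: for `p < 1/3`, using the conditional decomposition
bound (two geometric-harmonic sums for `E_v(i,0)` and `E_v(0,j)`, the `E_v(0,0)`
term, and the interior term), the optimal expected precision at an honest node
satisfies `D_OPT(v) ≤ (2p²/(1−p))·log(2/p) + O(1/n)`. -/
theorem stmt_17 (p : ℝ) (hp0 : 0 < p) (hp3 : p < 1 / 3) :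
    ∃ C : ℝ, ∀ n : ℕ, 4 / p ≤ (n : ℝ) → ∀ Dv : ℝ,
      Dv ≤ 2 * (∑' i : ℕ, (p + 1 / (n : ℝ)) ^ 2 * (1 - p + 2 / (n : ℝ)) ^ (i + 1)
              / ((i : ℝ) + 2))
            + (p + 1 / (n : ℝ)) ^ 2
            + (1 - p) ^ 2 / ((n : ℝ) * (1 - 3 * p)) →
      Dv ≤ 2 * p ^ 2 / (1 - p) * Real.log (2 / p) + C / (n : ℝ) :=
  ⟨6 * log (2 / p) / (1 - p) + (1 - p) ^ 2 / (1 - 3 * p),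
    fun _ hn _ hDv => hDv.trans (dandelion_precision_bound_le hp0 hp3 hn)⟩
end
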